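/- Let (S_t) be a Markov chain with killing, and let M be a set of states such that P^x(τ > C) ≤ e^{−C/(log C)²} for every x ∉ M (survival probability over C steps from non-M states is small). Define stopping times ζ_0 = 0 and ζ_i = inf{t > ζ_{i−1} + C : S_t ∉ M}. Then for any j ≥ 1, P(ζ_j ≤ m, τ > m) ≤ (e^{−C/(log C)²})^{j−1}, where τ is the killing time. -/

import Mathlib

/-!
Let `t` be the first time the chain is outside `M`. By the Markov property at `t`, surviving the
next `C` steps costs a factor `e^{−C/(log C)²}`, and the remaining `j − 1` visits outside `M`
all happen after time `t + C`, so by the Markov property at `t + C` and induction on `j` they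
cost `(e^{−C/(log C)²})^{j−2}`. The first-exit events for different `t` are disjoint, so summing
over `t` costs nothing. Path probabilities are handled as `ℝ≥0∞`-valued sums over paths, where the
Markov property is the factorisation of path weights along a prefix/suffix split.
-/

open scoped Classical

noncomputable def pathProb {V : Type*} (p : V → V → ℝ) (x : V) {m : ℕ} (ω : Fin m → V) : ℝ :=
  ∏ i : Fin m, p (if (i : ℕ) = 0 then x
    else ω ⟨(i : ℕ) - 1, lt_of_le_of_lt (Nat.sub_le _ _) i.isLt⟩) (ω i)

def traj {V : Type*} (x : V) {m : ℕ} (ω : Fin m → V) (t : ℕ) : V :=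
  if h : 1 ≤ t ∧ t ≤ m then ω ⟨t - 1, by omega⟩ else x

noncomputable def walkP {V : Type*} [Countable V] (p : V → V → ℝ) (x : V) (m : ℕ)
    (E : (Fin m → V) → Prop) : ℝ :=
  ∑' ω : Fin m → V, if E ω then pathProb p x ω else 0

open scoped ENNReal
open Finset

section Paths

variable {V : Type*} {m n : ℕ}

def pathPrefix (h : n ≤ m) (ω : Fin m → V) : Fin n → V :=
  fun i => ω (Fin.castLE h i)

def pathSuffix (h : n ≤ m) (ω : Fin m → V) : Fin (m - n) → V :=
  fun i => ω ⟨n + i, by omega⟩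

def pathSplit (h : n ≤ m) : (Fin m → V) ≃ (Fin n → V) × (Fin (m - n) → V) :=
  ((finCongr (Nat.add_sub_cancel' h)).arrowCongr (Equiv.refl V)).symm.trans
    (Fin.appendEquiv n (m - n)).symm

theorem traj_pathPrefix (h : n ≤ m) (x : V) (ω : Fin m → V) {t : ℕ} (ht : t ≤ n) :
    traj x (pathPrefix h ω) t = traj x ω t := by
  unfold traj pathPrefix
  split_ifs <;> first | rfl | omega

theorem traj_pathSuffix (h : n ≤ m) (x : V) (ω : Fin m → V) {t : ℕ} (ht : t ≤ m - n) :
    traj (traj x ω n) (pathSuffix h ω) t = traj x ω (n + t) := by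
  unfold traj pathSuffix
  split_ifs <;> first | rfl | omega | exact congrArg ω (Fin.ext (by simp only; omega))

end Paths

section Weights

variable {V : Type*} {m n : ℕ} (q : V → V → ℝ≥0∞)

noncomputable def pathWeight (x : V) (ω : Fin m → V) : ℝ≥0∞ :=
  ∏ i ∈ range m, q (traj x ω i) (traj x ω (i + 1))

noncomputable def eventWeight (x : V) (m : ℕ) (E : (Fin m → V) → Prop) : ℝ≥0∞ :=
  ∑' ω : Fin m → V, if E ω then pathWeight q x ω else 0

theorem pathWeight_eq_mul (h : n ≤ m) (x : V) (ω : Fin m → V) :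
    pathWeight q x ω =
      pathWeight q x (pathPrefix h ω) * pathWeight q (traj x ω n) (pathSuffix h ω) := by
  rw [pathWeight, show range m = range (n + (m - n)) by rw [Nat.add_sub_cancel' h],
    prod_range_add]
  congr 1
  · refine prod_congr rfl fun i hi => ?_
    rw [mem_range] at hi
    rw [traj_pathPrefix h x ω hi.le, traj_pathPrefix h x ω hi]
  · refine prod_congr rfl fun i hi => ?_
    rw [mem_range] at hi
    rw [traj_pathSuffix h x ω hi.le, traj_pathSuffix h x ω hi, add_assoc]

theorem tsum_pathPrefix_pathSuffix (h : n ≤ m) (G : (Fin n → V) → (Fin (m - n) → V) → ℝ≥0∞) :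
    ∑' ω, G (pathPrefix h ω) (pathSuffix h ω) = ∑' ω₁, ∑' ω₂, G ω₁ ω₂ :=
  -- `pathSplit h ω` unfolds to `(pathPrefix h ω, pathSuffix h ω)`
  ((pathSplit h).tsum_eq fun pr => G pr.1 pr.2).trans ENNReal.tsum_prod'

variable {q}

theorem tsum_pathWeight (hq : ∀ x, ∑' y, q x y = 1) (m : ℕ) (x : V) :
    ∑' ω : Fin m → V, pathWeight q x ω = 1 := by
  induction m generalizing x with
  | zero => simp [pathWeight]
  | succ m ih =>
    have h : 1 ≤ m + 1 := Nat.le_add_left 1 m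
    have hstep : ∀ y : V, pathWeight q x ((Equiv.funUnique (Fin 1) V).symm y) = q x y :=
      fun y => by simp [pathWeight, traj]
    simp_rw [pathWeight_eq_mul q h x, ← traj_pathPrefix h x _ le_rfl]
    rw [tsum_pathPrefix_pathSuffix h fun ω₁ ω₂ => pathWeight q x ω₁ * pathWeight q (traj x ω₁ 1) ω₂]
    have ih' : ∀ y, ∑' ω : Fin (m + 1 - 1) → V, pathWeight q y ω = 1 := ih
    simp_rw [ENNReal.tsum_mul_left, ih', mul_one]
    rw [← (Equiv.funUnique (Fin 1) V).symm.tsum_eq]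
    simp only [hstep, hq]

theorem eventWeight_le_one (hq : ∀ x, ∑' y, q x y = 1) (x : V) (m : ℕ)
    (E : (Fin m → V) → Prop) : eventWeight q x m E ≤ 1 :=
  (tsum_pathWeight hq m x).symm ▸ ENNReal.tsum_le_tsum fun ω => by split_ifs <;> simp

theorem eventWeight_eq_zero {x : V} {E : (Fin m → V) → Prop} (hE : ∀ ω, ¬ E ω) :
    eventWeight q x m E = 0 := by
  simp [eventWeight, hE]

theorem eventWeight_pathPrefix (hq : ∀ x, ∑' y, q x y = 1) (h : n ≤ m) (x : V)
    (E : (Fin n → V) → Prop) :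
    eventWeight q x m (fun ω => E (pathPrefix h ω)) = eventWeight q x n E := by
  simp_rw [eventWeight, pathWeight_eq_mul q h x, ← traj_pathPrefix h x _ le_rfl, ← ite_zero_mul]
  rw [tsum_pathPrefix_pathSuffix h fun ω₁ ω₂ =>
    (if E ω₁ then pathWeight q x ω₁ else 0) * pathWeight q (traj x ω₁ n) ω₂]
  simp_rw [ENNReal.tsum_mul_left, tsum_pathWeight hq, mul_one]

/-- The Markov property at the deterministic time `n`. -/
theorem eventWeight_le_mul (h : n ≤ m) {x : V} {E : (Fin m → V) → Prop}
    {E₁ : (Fin n → V) → Prop} {E₂ : V → (Fin (m - n) → V) → Prop} {c : ℝ≥0∞}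
    (hE : ∀ ω, E ω → E₁ (pathPrefix h ω) ∧ E₂ (traj x ω n) (pathSuffix h ω))
    (hc : ∀ y, eventWeight q y (m - n) (E₂ y) ≤ c) :
    eventWeight q x m E ≤ eventWeight q x n E₁ * c := by
  let G : (Fin n → V) → (Fin (m - n) → V) → ℝ≥0∞ := fun ω₁ ω₂ =>
    (if E₁ ω₁ then pathWeight q x ω₁ else 0) *
      if E₂ (traj x ω₁ n) ω₂ then pathWeight q (traj x ω₁ n) ω₂ else 0
  calc eventWeight q x m E ≤ ∑' ω, G (pathPrefix h ω) (pathSuffix h ω) := by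
        refine ENNReal.tsum_le_tsum fun ω => ?_
        by_cases hω : E ω
        · obtain ⟨h₁, h₂⟩ := hE ω hω
          simp only [G, if_pos hω, if_pos h₁, if_pos h₂, pathWeight_eq_mul q h x ω,
            traj_pathPrefix h x ω le_rfl, le_refl]
        · simp [hω]
    _ = ∑' ω₁, (if E₁ ω₁ then pathWeight q x ω₁ else 0) *
          eventWeight q (traj x ω₁ n) (m - n) (E₂ (traj x ω₁ n)) := by
        rw [tsum_pathPrefix_pathSuffix]
        simp only [G, ENNReal.tsum_mul_left, eventWeight]
    _ ≤ ∑' ω₁, (if E₁ ω₁ then pathWeight q x ω₁ else 0) * c := by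
        gcongr with ω₁
        exact hc _
    _ = eventWeight q x n E₁ * c := ENNReal.tsum_mul_right

theorem eventWeight_le_sum {x : V} {E : (Fin m → V) → Prop} {ι : Type*} {T : Finset ι}
    {D : ι → (Fin m → V) → Prop} (hE : ∀ ω, E ω → ∃ i ∈ T, D i ω) :
    eventWeight q x m E ≤ ∑ i ∈ T, eventWeight q x m (D i) := by
  simp only [eventWeight]
  rw [← Summable.tsum_finsetSum fun i _ => ENNReal.summable]
  refine ENNReal.tsum_le_tsum fun ω => ?_
  by_cases hω : E ω
  · obtain ⟨i, hi, hD⟩ := hE ω hω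
    calc (if E ω then pathWeight q x ω else 0) = if D i ω then pathWeight q x ω else 0 := by
          simp [hω, hD]
      _ ≤ _ := single_le_sum (f := fun i => if D i ω then pathWeight q x ω else 0)
          (fun _ _ => zero_le) hi
  · simp [hω]

theorem sum_eventWeight_le_one (hq : ∀ x, ∑' y, q x y = 1) {x : V} {ι : Type*} {T : Finset ι}
    {D : ι → (Fin m → V) → Prop} (hD : ∀ ω i j, D i ω → D j ω → i = j) :
    ∑ i ∈ T, eventWeight q x m (D i) ≤ 1 := by
  simp only [eventWeight]
  rw [← Summable.tsum_finsetSum fun i _ => ENNReal.summable, ← tsum_pathWeight hq m x]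
  refine ENNReal.tsum_le_tsum fun ω => ?_
  by_cases hω : ∃ i ∈ T, D i ω
  · obtain ⟨i, hi, hDi⟩ := hω
    rw [sum_eq_single_of_mem i hi fun j _ hji => if_neg fun hDj => hji (hD ω j i hDj hDi),
      if_pos hDi]
  · rw [sum_eq_zero fun i hi => if_neg fun hDi => hω ⟨i, hi, hDi⟩]
    exact zero_le

end Weights

section FirstHit

variable {V : Type*} {m n : ℕ} {A : Set V} {x : V}

def IsFirstHit (A : Set V) (x : V) (ω : Fin m → V) (t : ℕ) : Prop :=
  (∀ s < t, traj x ω s ∉ A) ∧ traj x ω t ∈ A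

theorem IsFirstHit.eq {ω : Fin m → V} {t t' : ℕ} (h : IsFirstHit A x ω t)
    (h' : IsFirstHit A x ω t') : t = t' := by
  rcases lt_trichotomy t t' with hlt | heq | hgt
  · exact absurd h.2 (h'.1 t hlt)
  · exact heq
  · exact absurd h'.2 (h.1 t' hgt)

theorem exists_isFirstHit_le {ω : Fin m → V} {s : ℕ} (hs : traj x ω s ∈ A) :
    ∃ t ≤ s, IsFirstHit A x ω t :=
  have hex : ∃ t, traj x ω t ∈ A := ⟨s, hs⟩
  ⟨Nat.find hex, Nat.find_min' hex hs, fun _ hlt => Nat.find_min hex hlt, Nat.find_spec hex⟩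

theorem isFirstHit_pathPrefix_iff (h : n ≤ m) (ω : Fin m → V) {t : ℕ} (ht : t ≤ n) :
    IsFirstHit A x (pathPrefix h ω) t ↔ IsFirstHit A x ω t := by
  unfold IsFirstHit
  rw [traj_pathPrefix h x ω ht]
  exact and_congr_left' <| forall₂_congr fun s hs => by rw [traj_pathPrefix h x ω (by omega)]

variable {q : V → V → ℝ≥0∞}

/-- The strong Markov property at the first hitting time of `A`. -/
theorem eventWeight_le_of_isFirstHit (hq : ∀ x, ∑' y, q x y = 1) {E : (Fin m → V) → Prop}
    {F : V → (k : ℕ) → (Fin k → V) → Prop} {c : ℝ≥0∞}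
    (hF : ∀ y ∈ A, ∀ k, eventWeight q y k (F y k) ≤ c)
    (hE : ∀ ω, E ω → ∃ t, ∃ h : t ≤ m,
      IsFirstHit A x ω t ∧ F (traj x ω t) (m - t) (pathSuffix h ω)) :
    eventWeight q x m E ≤ c := by
  have hmarkov : ∀ t ∈ range (m + 1),
      eventWeight q x m (fun ω => ∃ h : t ≤ m,
        IsFirstHit A x ω t ∧ F (traj x ω t) (m - t) (pathSuffix h ω)) ≤
      eventWeight q x m (IsFirstHit A x · t) * c := by
    intro t ht
    have h : t ≤ m := Nat.lt_succ_iff.mp (mem_range.mp ht)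
    calc _ ≤ eventWeight q x t (IsFirstHit A x · t) * c :=
          eventWeight_le_mul h (E₂ := fun y ω₂ => y ∈ A ∧ F y (m - t) ω₂)
            (fun ω ⟨_, hhit, hF⟩ =>
              ⟨(isFirstHit_pathPrefix_iff h ω le_rfl).mpr hhit, hhit.2, hF⟩)
            (fun y => by
              by_cases hy : y ∈ A
              · simpa only [hy, true_and] using hF y hy (m - t)
              · simp [eventWeight_eq_zero, hy])
      _ = eventWeight q x m (IsFirstHit A x · t) * c := by
          rw [← eventWeight_pathPrefix hq h]
          simp only [isFirstHit_pathPrefix_iff h _ le_rfl]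
  calc eventWeight q x m E
      ≤ ∑ t ∈ range (m + 1), eventWeight q x m (fun ω => ∃ h : t ≤ m,
          IsFirstHit A x ω t ∧ F (traj x ω t) (m - t) (pathSuffix h ω)) :=
        eventWeight_le_sum fun ω hω =>
          let ⟨t, h, hF⟩ := hE ω hω
          ⟨t, mem_range.mpr (Nat.lt_succ_of_le h), h, hF⟩
    _ ≤ ∑ t ∈ range (m + 1), eventWeight q x m (IsFirstHit A x · t) * c := sum_le_sum hmarkov
    _ = (∑ t ∈ range (m + 1), eventWeight q x m (IsFirstHit A x · t)) * c := (sum_mul ..).symm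
    _ ≤ c := mul_le_of_le_one_left' (sum_eventWeight_le_one hq fun _ _ _ => IsFirstHit.eq)

end FirstHit

section RealWeights

theorem tsum_ofReal_eq_one {α : Type*} {f : α → ℝ} (hf0 : ∀ a, 0 ≤ f a) (hf1 : ∑' a, f a = 1) :
    ∑' a, ENNReal.ofReal (f a) = 1 := by
  have hsum : Summable f := by
    by_contra hns
    exact zero_ne_one ((tsum_eq_zero_of_not_summable hns).symm.trans hf1)
  rw [← ENNReal.ofReal_tsum_of_nonneg hf0 hsum, hf1, ENNReal.ofReal_one]

variable {V : Type*} {p : V → V → ℝ}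

theorem pathProb_eq_prod_range (x : V) {m : ℕ} (ω : Fin m → V) :
    pathProb p x ω = ∏ i ∈ range m, p (traj x ω i) (traj x ω (i + 1)) := by
  rw [pathProb, ← Fin.prod_univ_eq_prod_range (fun i => p (traj x ω i) (traj x ω (i + 1)))]
  refine prod_congr rfl fun i _ => ?_
  have hi := i.isLt
  congr 1
  · unfold traj
    split_ifs <;> first | rfl | omega
  · unfold traj
    rw [dif_pos ⟨by omega, by omega⟩]
    rfl

theorem ofReal_pathProb (hp0 : ∀ x y, 0 ≤ p x y) (x : V) {m : ℕ} (ω : Fin m → V) :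
    ENNReal.ofReal (pathProb p x ω) = pathWeight (fun a b => ENNReal.ofReal (p a b)) x ω := by
  rw [pathProb_eq_prod_range, ENNReal.ofReal_prod_of_nonneg fun _ _ => hp0 _ _, pathWeight]

theorem walkP_eq_toReal [Countable V] (hp0 : ∀ x y, 0 ≤ p x y) (x : V) (m : ℕ)
    (E : (Fin m → V) → Prop) :
    walkP p x m E = (eventWeight (fun a b => ENNReal.ofReal (p a b)) x m E).toReal := by
  have hnonneg : ∀ ω : Fin m → V, 0 ≤ if E ω then pathProb p x ω else 0 := fun ω => by
    split_ifs
    exacts [prod_nonneg fun _ _ => hp0 _ _, le_rfl]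
  have hterm : ∀ ω : Fin m → V,
      (if E ω then pathWeight (fun a b => ENNReal.ofReal (p a b)) x ω else 0) =
        ENNReal.ofReal (if E ω then pathProb p x ω else 0) := fun ω => by
    rw [apply_ite ENNReal.ofReal, ofReal_pathProb hp0, ENNReal.ofReal_zero]
  rw [eventWeight, tsum_congr hterm, ENNReal.tsum_toReal_eq fun _ => ENNReal.ofReal_ne_top]
  exact tsum_congr fun ω => (ENNReal.toReal_ofReal (hnonneg ω)).symm

end RealWeights

section SpacedVisits

variable {V : Type*} {m n : ℕ} {O A : Set V} {C k ℓ : ℕ} {x : V} {ω : Fin m → V}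

def Survives (O : Set V) (x : V) (ω : Fin m → V) : Prop :=
  ∀ t ≤ m, traj x ω t ∉ O

def HasSpacedVisits (A : Set V) (C k ℓ : ℕ) (x : V) (ω : Fin m → V) : Prop :=
  ∃ ts : Fin k → ℕ, (∀ a, ℓ ≤ ts a) ∧ (∀ a b, a < b → ts a + C < ts b) ∧ (∀ a, ts a ≤ m) ∧
    ∀ a, traj x ω (ts a) ∈ A

theorem Survives.pathPrefix (h : n ≤ m) (hω : Survives O x ω) :
    Survives O x (pathPrefix h ω) := fun t ht => by
  rw [traj_pathPrefix h x ω ht]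
  exact hω t (ht.trans h)

theorem Survives.pathSuffix (h : n ≤ m) (hω : Survives O x ω) :
    Survives O (traj x ω n) (pathSuffix h ω) := fun t ht => by
  rw [traj_pathSuffix h x ω ht]
  exact hω (n + t) (by omega)

theorem HasSpacedVisits.pathSuffix (h : n ≤ m) {ℓ' : ℕ} (hℓ : n + ℓ' ≤ ℓ)
    (hω : HasSpacedVisits A C k ℓ x ω) :
    HasSpacedVisits A C k ℓ' (traj x ω n) (pathSuffix h ω) := by
  obtain ⟨ts, hstart, hgap, hle, hA⟩ := hω
  refine ⟨fun a => ts a - n, fun a => ?_, fun a b hab => ?_, fun a => ?_, fun a => ?_⟩ <;>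
    dsimp only
  · have := hstart a
    omega
  · have := hgap a b hab
    have := hstart a
    omega
  · have := hle a
    omega
  · have := hstart a
    rw [traj_pathSuffix h x ω (by have := hle a; omega), Nat.add_sub_cancel' (by omega)]
    exact hA a

theorem HasSpacedVisits.exists_isFirstHit (hω : HasSpacedVisits A C (k + 1) ℓ x ω) :
    ∃ t ≤ m, IsFirstHit A x ω t :=
  let ⟨_, _, _, hle, hA⟩ := hω
  let ⟨t, ht, hhit⟩ := exists_isFirstHit_le (hA 0)
  ⟨t, ht.trans (hle 0), hhit⟩

theorem HasSpacedVisits.tail {t : ℕ} (hω : HasSpacedVisits A C (k + 1) ℓ x ω)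
    (hhit : IsFirstHit A x ω t) : HasSpacedVisits A C k (t + (C + 1)) x ω := by
  obtain ⟨ts, -, hgap, hle, hA⟩ := hω
  have hfirst : t ≤ ts 0 := not_lt.mp fun hlt => hhit.1 _ hlt (hA 0)
  refine ⟨fun a => ts a.succ, fun a => ?_, fun a b hab => hgap _ _ (Fin.succ_lt_succ_iff.mpr hab),
    fun a => hle _, fun a => hA _⟩
  have := hgap 0 a.succ (Fin.succ_pos a)
  dsimp only
  omega

variable {q : V → V → ℝ≥0∞} {ε : ℝ≥0∞}

theorem eventWeight_survives_hasSpacedVisits_of_mem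
    (hbad : ∀ y ∈ A, eventWeight q y C (Survives O y) ≤ ε)
    (ih : ∀ x m ℓ, eventWeight q x m (fun ω => Survives O x ω ∧ HasSpacedVisits A C (k + 1) ℓ x ω)
      ≤ ε ^ k)
    {y : V} (hy : y ∈ A) (m : ℕ) :
    eventWeight q y m (fun ω => Survives O y ω ∧ HasSpacedVisits A C (k + 1) (C + 1) y ω) ≤
      ε ^ (k + 1) := by
  rcases le_or_gt C m with h | h
  · calc _ ≤ eventWeight q y C (Survives O y) * ε ^ k :=
          eventWeight_le_mul h (fun ω ⟨hs, hv⟩ =>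
              ⟨hs.pathPrefix h, hs.pathSuffix h, hv.pathSuffix h (ℓ' := 1) le_rfl⟩)
            fun z => ih z (m - C) 1
      _ ≤ ε * ε ^ k := by gcongr; exact hbad y hy
      _ = ε ^ (k + 1) := (pow_succ' ε k).symm
  · rw [eventWeight_eq_zero fun ω ⟨_, ts, hstart, _, hle, _⟩ => by
      have := hstart 0
      have := hle 0
      omega]
    exact zero_le

theorem eventWeight_survives_hasSpacedVisits_le (hq : ∀ x, ∑' y, q x y = 1)
    (hbad : ∀ y ∈ A, eventWeight q y C (Survives O y) ≤ ε) (k : ℕ) :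
    ∀ x m ℓ, eventWeight q x m (fun ω => Survives O x ω ∧ HasSpacedVisits A C (k + 1) ℓ x ω) ≤
      ε ^ k := by
  induction k with
  | zero => exact fun x m ℓ => (eventWeight_le_one hq x m _).trans_eq (pow_zero ε).symm
  | succ k ih =>
    intro x m ℓ
    refine eventWeight_le_of_isFirstHit hq
      (F := fun y _ ω => Survives O y ω ∧ HasSpacedVisits A C (k + 1) (C + 1) y ω)
      (fun y hy m => eventWeight_survives_hasSpacedVisits_of_mem hbad ih hy m)
      fun ω ⟨hs, hv⟩ => ?_
    obtain ⟨t, h, hhit⟩ := hv.exists_isFirstHit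
    exact ⟨t, h, hhit, hs.pathSuffix h, (hv.tail hhit).pathSuffix h le_rfl⟩

end SpacedVisits

theorem stmt12_general {V : Type*} [Countable V] (p : V → V → ℝ)
    (hp0 : ∀ x y, 0 ≤ p x y) (hp1 : ∀ x, ∑' y, p x y = 1)
    (O M : Set V) (C : ℕ)
    (hbad : ∀ x ∉ M, walkP p x C (fun ω => ∀ t ≤ C, traj x ω t ∉ O) ≤
      Real.exp (-(C : ℝ) / (Real.log C) ^ 2))
    (x0 : V) (j m : ℕ) :
    walkP p x0 m (fun ω =>
      (∀ t ≤ m, traj x0 ω t ∉ O) ∧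
      ∃ ts : Fin j → ℕ, (∀ a : Fin j, C < ts a) ∧
        (∀ a b : Fin j, a < b → ts a + C < ts b) ∧
        (∀ a : Fin j, ts a ≤ m) ∧
        (∀ a : Fin j, traj x0 ω (ts a) ∉ M)) ≤
      Real.exp (-(C : ℝ) / (Real.log C) ^ 2) ^ (j - 1) := by
  set ε := Real.exp (-(C : ℝ) / (Real.log C) ^ 2)
  have hq : ∀ x, ∑' y, ENNReal.ofReal (p x y) = 1 := fun x => tsum_ofReal_eq_one (hp0 x) (hp1 x)
  have hbad' : ∀ y ∈ Mᶜ, eventWeight (fun a b => ENNReal.ofReal (p a b)) y C (Survives O y) ≤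
      ENNReal.ofReal ε := fun y hy =>
    (ENNReal.le_ofReal_iff_toReal_le ((eventWeight_le_one hq y C _).trans_lt ENNReal.one_lt_top).ne
      (Real.exp_nonneg _)).mpr ((walkP_eq_toReal hp0 y C _).symm.trans_le (hbad y hy))
  rw [walkP_eq_toReal hp0]
  refine ENNReal.toReal_le_of_le_ofReal (by positivity) ?_
  rcases j with _ | k
  · simpa using eventWeight_le_one hq x0 m _
  · rw [ENNReal.ofReal_pow (Real.exp_nonneg _)]
    -- the event unfolds to `Survives O x0 ω ∧ HasSpacedVisits Mᶜ C (k + 1) (C + 1) x0 ω`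
    exact eventWeight_survives_hasSpacedVisits_le hq hbad' k x0 m (C + 1)

/-- if from every state outside `M` the probability of surviving (avoiding the
obstacle set `O`) for `C` steps is at most `e^{−C/(log C)²}`, then the probability of surviving
`m` steps while there exist `j` times `ts 0 < ts 1 < ⋯`, each `> C`, with successive gaps `> C`,
all `≤ m`, at which the chain is outside `M` (i.e. the event `{ζ_j ≤ m, τ > m}`) is at most
`(e^{−C/(log C)²})^{j−1}`. -/
theorem stmt12 {V : Type*} [Countable V] (p : V → V → ℝ)
    (hp0 : ∀ x y, 0 ≤ p x y) (hp1 : ∀ x, ∑' y, p x y = 1)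
    (O M : Set V) (C : ℕ) (hC : 2 ≤ C)
    (hbad : ∀ x ∉ M, walkP p x C (fun ω => ∀ t ≤ C, traj x ω t ∉ O) ≤
      Real.exp (-(C : ℝ) / (Real.log C) ^ 2))
    (x0 : V) (j m : ℕ) (hj : 1 ≤ j) :
    walkP p x0 m (fun ω =>
      (∀ t ≤ m, traj x0 ω t ∉ O) ∧
      ∃ ts : Fin j → ℕ, (∀ a : Fin j, C < ts a) ∧
        (∀ a b : Fin j, a < b → ts a + C < ts b) ∧
        (∀ a : Fin j, ts a ≤ m) ∧
        (∀ a : Fin j, traj x0 ω (ts a) ∉ M)) ≤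
      Real.exp (-(C : ℝ) / (Real.log C) ^ 2) ^ (j - 1) :=
  stmt12_general p hp0 hp1 O M C hbad x0 j m
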